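/- arXiv:quant-ph/0303182 — 6 statements merged into one kernel-verified Lean document; each statement's English description precedes it below -/
import Mathlib

section
/- Suppose |φ₀⟩, |φ₁⟩ are unit vectors with |⟨φ₀|φ₁⟩|² = cos²θ (sin θ > 0), and σ, σ̄, τ, τ̄ are density operators with (a) q·σ + (1-q)·σ̄ = q·τ + (1-q)·τ̄ for some 0 < q < 1, (b) D(σ,|φ₀⟩⟨φ₀|) ≤ √(γ/q), D(τ̄,|φ₀⟩⟨φ₀|) ≤ √(γ/(1-q)), D(σ̄,|φ₁⟩⟨φ₁|) ≤ √(γ/(1-q)), D(τ,|φ₁⟩⟨φ₁|) ≤ √(γ/q). Then q - 1/2 ≤ √(2γ)/sin²θ. -/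
/-!
Everything is read through the overlap `ρ ↦ ⟨φ₀|ρ|φ₀⟩ = Tr (P ρ)`, `P = |φ₀⟩⟨φ₀|`.
For Hermitian `ρ, ρ'` of equal trace, `Tr (P (ρ - ρ')) ≤ Tr (ρ - ρ')⁺ = ½ Tr |ρ - ρ'|`, so the
overlap moves by at most the trace distance: `σ` and `τ'` have overlap `≈ 1`, while `σ'` and `τ`
have overlap `≈ cos² θ`. Applying the overlap to the mixing identity gives
`q sin² θ ≤ (1 - q) sin² θ + 2 (q √(γ/q) + (1 - q) √(γ/(1-q)))`, and the error term is at most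
`2 √(2γ)` by convexity of the square.
-/

open ComplexOrder

/-- Trace distance D(ρ,ρ') = (1/2)·Tr √((ρ-ρ')ᴴ(ρ-ρ')). -/
noncomputable def traceDist {d : ℕ} (ρ σ : Matrix (Fin d) (Fin d) ℂ) : ℝ :=
  (1/2) * (((Matrix.posSemidef_conjTranspose_mul_self (ρ - σ)).isHermitian.eigenvectorUnitary.1 *
    Matrix.diagonal ((fun x : ℝ => (x : ℂ)) ∘ (Real.sqrt ·) ∘
      (Matrix.posSemidef_conjTranspose_mul_self (ρ - σ)).isHermitian.eigenvalues) *
    (star (Matrix.posSemidef_conjTranspose_mul_self (ρ - σ)).isHermitian.eigenvectorUnitary :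
      Matrix (Fin d) (Fin d) ℂ)).trace).re

open Matrix
open scoped MatrixOrder

namespace Matrix

variable {n 𝕜 : Type*} [Fintype n] [RCLike 𝕜] {φ : n → 𝕜}

lemma vecMulVec_star_mul_self (hφ : star φ ⬝ᵥ φ = 1) :
    vecMulVec φ (star φ) * vecMulVec φ (star φ) = vecMulVec φ (star φ) := by
  rw [vecMulVec_mul_vecMulVec, hφ, one_smul]

lemma trace_mul_vecMulVec_star (B : Matrix n n 𝕜) :
    (B * vecMulVec φ (star φ)).trace = star φ ⬝ᵥ B *ᵥ φ := by
  rw [mul_vecMulVec, trace_vecMulVec, dotProduct_comm]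

lemma re_dotProduct_mulVec_vecMulVec_star (φ ψ : n → 𝕜) :
    RCLike.re (star φ ⬝ᵥ vecMulVec ψ (star ψ) *ᵥ φ) = ‖star φ ⬝ᵥ ψ‖ ^ 2 := by
  rw [vecMulVec_mulVec, dotProduct_smul, MulOpposite.smul_eq_mul_unop, MulOpposite.unop_op,
    star_dotProduct ψ φ, RCLike.star_def, RCLike.mul_conj, ← RCLike.ofReal_pow, RCLike.ofReal_re]

variable [DecidableEq n]

-- `Tr B - ⟨φ|B|φ⟩ = Tr (Q B Q)` for the projector `Q = 1 - |φ⟩⟨φ|`.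
lemma PosSemidef.dotProduct_mulVec_le_trace {B : Matrix n n 𝕜} (hB : B.PosSemidef)
    (hφ : star φ ⬝ᵥ φ = 1) : star φ ⬝ᵥ B *ᵥ φ ≤ B.trace := by
  set Q := 1 - vecMulVec φ (star φ)
  have hQ : Qᴴ = Q := by simp [Q, conjTranspose_vecMulVec]
  have hQQ : Q * Q = Q := by
    simp only [Q, sub_mul, mul_sub, one_mul, mul_one, vecMulVec_star_mul_self hφ, sub_self,
      sub_zero]
  have h := (hB.mul_mul_conjTranspose_same Q).trace_nonneg
  rwa [hQ, trace_mul_cycle, hQQ, trace_mul_comm, mul_sub, mul_one, trace_sub,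
    trace_mul_vecMulVec_star, sub_nonneg] at h

lemma dotProduct_mulVec_le_trace_posPart {A : Matrix n n 𝕜} (hA : A.IsHermitian)
    (hφ : star φ ⬝ᵥ φ = 1) : star φ ⬝ᵥ A *ᵥ φ ≤ (A⁺).trace := by
  have hgap := (le_iff.mp (CFC.le_posPart hA.isSelfAdjoint)).dotProduct_mulVec_nonneg φ
  rw [sub_mulVec, dotProduct_sub, sub_nonneg] at hgap
  exact hgap.trans
    ((nonneg_iff_posSemidef.mp (CFC.posPart_nonneg A)).dotProduct_mulVec_le_trace hφ)

-- With `Tr A = 0` the positive and negative parts have equal trace, namely `Tr |A| / 2`.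
lemma abs_re_dotProduct_mulVec_le {A : Matrix n n 𝕜} (hA : A.IsHermitian) (htr : A.trace = 0)
    (hφ : star φ ⬝ᵥ φ = 1) :
    |RCLike.re (star φ ⬝ᵥ A *ᵥ φ)| ≤ RCLike.re (CFC.abs A).trace / 2 := by
  have hpos := RCLike.re_le_re (dotProduct_mulVec_le_trace_posPart hA hφ)
  have hneg := RCLike.re_le_re (dotProduct_mulVec_le_trace_posPart hA.neg hφ)
  rw [CFC.posPart_neg, neg_mulVec, dotProduct_neg, map_neg] at hneg
  have hsum : A⁺.trace + A⁻.trace = (CFC.abs A).trace := by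
    rw [← trace_add, CFC.posPart_add_negPart A hA.isSelfAdjoint]
  have hdiff : A⁺.trace - A⁻.trace = 0 := by
    rw [← trace_sub, CFC.posPart_sub_negPart A hA.isSelfAdjoint, htr]
  have hsum_re := congrArg RCLike.re hsum
  have hdiff_re := congrArg RCLike.re hdiff
  rw [map_add] at hsum_re
  rw [map_sub, map_zero] at hdiff_re
  rw [abs_le]
  constructor <;> linarith

end Matrix

lemma traceDist_eq {d : ℕ} (ρ σ : Matrix (Fin d) (Fin d) ℂ) :
    traceDist ρ σ = (CFC.abs (ρ - σ)).trace.re / 2 := by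
  have hB := posSemidef_conjTranspose_mul_self (ρ - σ)
  have habs : CFC.abs (ρ - σ) = hB.isHermitian.cfc Real.sqrt := by
    rw [CFC.abs, CFC.sqrt_eq_real_sqrt (star (ρ - σ) * (ρ - σ)) (nonneg_iff_posSemidef.mpr hB),
      cfcₙ_eq_cfc]
    exact hB.isHermitian.cfc_eq _
  rw [traceDist, habs, IsHermitian.cfc, Unitary.conjStarAlgAut_apply, one_div_mul_eq_div]
  rfl

lemma abs_re_dotProduct_mulVec_sub_le_traceDist {d : ℕ} {ρ σ : Matrix (Fin d) (Fin d) ℂ}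
    (hρ : ρ.IsHermitian) (hσ : σ.IsHermitian) (htr : ρ.trace = σ.trace) {φ : Fin d → ℂ}
    (hφ : star φ ⬝ᵥ φ = 1) :
    |(star φ ⬝ᵥ ρ *ᵥ φ).re - (star φ ⬝ᵥ σ *ᵥ φ).re| ≤ traceDist ρ σ := by
  have h := abs_re_dotProduct_mulVec_le (hρ.sub hσ) (by rw [trace_sub, htr, sub_self]) hφ
  rw [traceDist_eq]
  simpa only [sub_mulVec, dotProduct_sub, map_sub, RCLike.re_to_complex] using h

lemma abs_re_dotProduct_mulVec_sub_le_traceDist_pure {d : ℕ} {ρ : Matrix (Fin d) (Fin d) ℂ}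
    (hρ : ρ.IsHermitian) (hρtr : ρ.trace = 1) {φ ψ : Fin d → ℂ}
    (hφ : star φ ⬝ᵥ φ = 1) (hψ : star ψ ⬝ᵥ ψ = 1) :
    |(star φ ⬝ᵥ ρ *ᵥ φ).re - ‖star φ ⬝ᵥ ψ‖ ^ 2| ≤ traceDist ρ (vecMulVec ψ (star ψ)) := by
  have h := abs_re_dotProduct_mulVec_sub_le_traceDist hρ
    (posSemidef_vecMulVec_self_star ψ).isHermitian
    (by rw [hρtr, trace_vecMulVec, dotProduct_comm, hψ]) hφ
  rwa [← re_dotProduct_mulVec_vecMulVec_star, RCLike.re_to_complex]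

lemma mul_sqrt_div_add_mul_sqrt_div_le {q γ : ℝ} (hq0 : 0 < q) (hq1 : q < 1) (hγ : 0 ≤ γ) :
    q * √(γ / q) + (1 - q) * √(γ / (1 - q)) ≤ √(2 * γ) := by
  have hq1' : 0 < 1 - q := sub_pos.mpr hq1
  have ha : q * √(γ / q) ^ 2 = γ := by
    rw [Real.sq_sqrt (div_nonneg hγ hq0.le)]; field_simp
  have hb : (1 - q) * √(γ / (1 - q)) ^ 2 = γ := by
    rw [Real.sq_sqrt (div_nonneg hγ hq1'.le)]; field_simp
  -- `q a² + (1 - q) b² - (q a + (1 - q) b)² = q (1 - q) (a - b)²`, and `q a² = (1 - q) b² = γ`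
  refine (le_abs_self _).trans (Real.abs_le_sqrt ?_)
  nlinarith [mul_nonneg (mul_pos hq0 hq1').le (sq_nonneg (√(γ / q) - √(γ / (1 - q))))]

lemma sub_half_mul_le_sqrt_of_mixture {q γ c x x' y y' : ℝ} (hq0 : 0 < q) (hq1 : q < 1)
    (hγ : 0 ≤ γ) (hmix : q * x + (1 - q) * x' = q * y + (1 - q) * y')
    (hx : |x - 1| ≤ √(γ / q)) (hy' : |y' - 1| ≤ √(γ / (1 - q)))
    (hx' : |x' - c| ≤ √(γ / (1 - q))) (hy : |y - c| ≤ √(γ / q)) :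
    (q - 1 / 2) * (1 - c) ≤ √(2 * γ) := by
  have hlow : q * (1 - c - 2 * √(γ / q)) ≤ q * (x - y) :=
    mul_le_mul_of_nonneg_left (by linarith [(abs_le.mp hx).1, (abs_le.mp hy).2]) hq0.le
  have hupp : (1 - q) * (y' - x') ≤ (1 - q) * (1 - c + 2 * √(γ / (1 - q))) :=
    mul_le_mul_of_nonneg_left (by linarith [(abs_le.mp hy').2, (abs_le.mp hx').1]) (by linarith)
  linarith [mul_sqrt_div_add_mul_sqrt_div_le hq0 hq1 hγ]

/-- the key estimate behind Theorem 1 of the paper. -/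
theorem stmt3 {d : ℕ} (φ₀ φ₁ : Fin d → ℂ)
    (hφ₀ : dotProduct (star φ₀) φ₀ = 1)
    (hφ₁ : dotProduct (star φ₁) φ₁ = 1)
    (θ : ℝ) (hθ : ‖dotProduct (star φ₀) φ₁‖ ^ 2 = Real.cos θ ^ 2)
    (hsin : 0 < Real.sin θ)
    (σ σ' τ τ' : Matrix (Fin d) (Fin d) ℂ)
    (hσ : σ.PosSemidef) (hσ' : σ'.PosSemidef) (hτ : τ.PosSemidef) (hτ' : τ'.PosSemidef)
    (hσtr : σ.trace = 1) (hσ'tr : σ'.trace = 1) (hτtr : τ.trace = 1) (hτ'tr : τ'.trace = 1)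
    (q γ : ℝ) (hq0 : 0 < q) (hq1 : q < 1) (hγ : 0 ≤ γ)
    (hmix : (q : ℂ) • σ + ((1 - q : ℝ) : ℂ) • σ' = (q : ℂ) • τ + ((1 - q : ℝ) : ℂ) • τ')
    (hDσ : traceDist σ (Matrix.vecMulVec φ₀ (star φ₀)) ≤ Real.sqrt (γ / q))
    (hDτ' : traceDist τ' (Matrix.vecMulVec φ₀ (star φ₀)) ≤ Real.sqrt (γ / (1 - q)))
    (hDσ' : traceDist σ' (Matrix.vecMulVec φ₁ (star φ₁)) ≤ Real.sqrt (γ / (1 - q)))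
    (hDτ : traceDist τ (Matrix.vecMulVec φ₁ (star φ₁)) ≤ Real.sqrt (γ / q)) :
    q - 1/2 ≤ Real.sqrt (2 * γ) / Real.sin θ ^ 2 := by
  have hnorm₀ : ‖star φ₀ ⬝ᵥ φ₀‖ ^ 2 = 1 := by rw [hφ₀, norm_one, one_pow]
  have hmix' := congrArg (fun ρ : Matrix (Fin d) (Fin d) ℂ => (star φ₀ ⬝ᵥ ρ *ᵥ φ₀).re) hmix
  simp only [add_mulVec, smul_mulVec, dotProduct_add, dotProduct_smul, smul_eq_mul,
    Complex.add_re, Complex.re_ofReal_mul] at hmix'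
  rw [le_div_iff₀ (pow_pos hsin 2), Real.sin_sq]
  exact sub_half_mul_le_sqrt_of_mixture hq0 hq1 hγ hmix'
    ((hnorm₀ ▸ abs_re_dotProduct_mulVec_sub_le_traceDist_pure hσ.1 hσtr hφ₀ hφ₀).trans hDσ)
    ((hnorm₀ ▸ abs_re_dotProduct_mulVec_sub_le_traceDist_pure hτ'.1 hτ'tr hφ₀ hφ₀).trans hDτ')
    ((hθ ▸ abs_re_dotProduct_mulVec_sub_le_traceDist_pure hσ'.1 hσ'tr hφ₀ hφ₁).trans hDσ')
    ((hθ ▸ abs_re_dotProduct_mulVec_sub_le_traceDist_pure hτ.1 hτtr hφ₀ hφ₁).trans hDτ)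
end

section
/- Let 0 ≤ q ≤ 1, α, β, f real with α² + β² = 1, 0 ≤ f ≤ 1, and suppose real numbers s_z satisfy s_z² + f²β²/4 ≤ q² and (fα - s_z)² + f²β²/4 ≤ (1-q)². If f²α² ≤ 1 - f|β|, then q ≤ 1 - f|β|/2, and this maximum is achieved with s_z = fα. -/
/-- case f ≤ f* of the optimization in Theorem 2. -/
theorem stmt4 (q α β f : ℝ) (hq0 : 0 ≤ q) (hq1 : q ≤ 1)
    (hαβ : α ^ 2 + β ^ 2 = 1) (hf0 : 0 ≤ f) (hf1 : f ≤ 1)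
    (hcase : f ^ 2 * α ^ 2 ≤ 1 - f * |β|) :
    (∀ s_z : ℝ,
        s_z ^ 2 + f ^ 2 * β ^ 2 / 4 ≤ q ^ 2 →
        (f * α - s_z) ^ 2 + f ^ 2 * β ^ 2 / 4 ≤ (1 - q) ^ 2 →
        q ≤ 1 - f * |β| / 2) ∧
      ((f * α) ^ 2 + f ^ 2 * β ^ 2 / 4 ≤ (1 - f * |β| / 2) ^ 2 ∧
        (f * α - f * α) ^ 2 + f ^ 2 * β ^ 2 / 4 ≤ (1 - (1 - f * |β| / 2)) ^ 2) := by
  have hb : 0 ≤ f * |β| := mul_nonneg hf0 (abs_nonneg β)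
  have hsq : (f * |β|) ^ 2 = f ^ 2 * β ^ 2 := by
    rw [mul_pow, sq_abs]
  refine ⟨fun s_z h1 h2 => ?_, ?_, ?_⟩
  · nlinarith [sq_nonneg (f * α - s_z), sq_nonneg (1 - q + f * |β| / 2)]
  · nlinarith
  · nlinarith
end

section
/- Let α, β, f be reals with α² + β² = 1, 0 < f < 1, 0 < α < 1, and f²α² > 1 - f|β|. If 1/2 ≤ q ≤ 1 and there exists a real s_z with s_z² + f²β²/4 ≤ q² and (fα - s_z)² + f²β²/4 ≤ (1-q)², then q ≤ 1/2 + (1/2)·√(f²α²(1-f²)/(1 - f²α²)). -/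
set_option maxHeartbeats 1600000 in
/-- case f > f* of the optimization in Theorem 2. -/
theorem stmt5 (α β f q : ℝ) (hαβ : α ^ 2 + β ^ 2 = 1)
    (hf0 : 0 < f) (hf1 : f < 1) (hα0 : 0 < α) (hα1 : α < 1)
    (hcase : 1 - f * |β| < f ^ 2 * α ^ 2)
    (hq0 : 1/2 ≤ q) (hq1 : q ≤ 1)
    (hs : ∃ s_z : ℝ,
        s_z ^ 2 + f ^ 2 * β ^ 2 / 4 ≤ q ^ 2 ∧
        (f * α - s_z) ^ 2 + f ^ 2 * β ^ 2 / 4 ≤ (1 - q) ^ 2) :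
    q ≤ 1/2 + (1/2) * Real.sqrt (f ^ 2 * α ^ 2 * (1 - f ^ 2) / (1 - f ^ 2 * α ^ 2)) := by
  obtain ⟨s, h1, h2⟩ := hs
  have hb : (f * |β|) ^ 2 = f ^ 2 * β ^ 2 := by rw [mul_pow, sq_abs]
  have hbpos : 0 ≤ f * |β| := by positivity
  have ha2 : 0 < 1 - f ^ 2 * α ^ 2 := by nlinarith
  -- from constraint 2 : 1 - q ≥ b/2
  have hq2 : f * |β| / 2 ≤ 1 - q := by
    nlinarith [sq_nonneg (f * α - s), sq_nonneg (1 - q + f * |β| / 2)]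
  -- weights are nonnegative
  have hw1 : 0 ≤ f ^ 2 * α ^ 2 / 2 - (q - 1/2) := by nlinarith
  have hw2 : 0 ≤ f ^ 2 * α ^ 2 / 2 + (q - 1/2) := by nlinarith
  have hc1 : 0 ≤ q ^ 2 - s ^ 2 - f ^ 2 * β ^ 2 / 4 := by linarith
  have hc2 : 0 ≤ (1 - q) ^ 2 - (f * α - s) ^ 2 - f ^ 2 * β ^ 2 / 4 := by linarith
  have hid : f ^ 2 * α ^ 2 * (1 - f ^ 2) / 4 - (q - 1/2) ^ 2 * (1 - f ^ 2 * α ^ 2) =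
      (f ^ 2 * α ^ 2 / 2 - (q - 1/2)) * (q ^ 2 - s ^ 2 - f ^ 2 * β ^ 2 / 4) +
      (f ^ 2 * α ^ 2 / 2 + (q - 1/2)) * ((1 - q) ^ 2 - (f * α - s) ^ 2 - f ^ 2 * β ^ 2 / 4) +
      (s * f * α - f ^ 2 * α ^ 2 / 2 - (q - 1/2)) ^ 2 := by
    linear_combination (f ^ 4 * α ^ 2 / 4) * hαβ
  have hkey : (q - 1/2) ^ 2 * (1 - f ^ 2 * α ^ 2) ≤ f ^ 2 * α ^ 2 * (1 - f ^ 2) / 4 := by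
    linarith [mul_nonneg hw1 hc1, mul_nonneg hw2 hc2,
      sq_nonneg (s * f * α - f ^ 2 * α ^ 2 / 2 - (q - 1/2)), hid]
  have hD : (2 * (q - 1/2)) ^ 2 ≤ f ^ 2 * α ^ 2 * (1 - f ^ 2) / (1 - f ^ 2 * α ^ 2) := by
    rw [le_div_iff₀ ha2]; linarith [hkey]
  have h4 : 2 * (q - 1/2) ≤ Real.sqrt (f ^ 2 * α ^ 2 * (1 - f ^ 2) / (1 - f ^ 2 * α ^ 2)) := by
    calc 2 * (q - 1/2) = Real.sqrt ((2 * (q - 1/2)) ^ 2) := by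
          rw [Real.sqrt_sq (by linarith)]
      _ ≤ _ := Real.sqrt_le_sqrt hD
  linarith
end

section
/- Let α, β, f be reals with α² + β² = 1, 0 < f ≤ 1, β > 0. Setting q = 1/2 + (1/2)·√(f²α²(1-f²)/(1-f²α²)) and s_z = fα/2 + q/(fα) - 1/(2fα) (assuming α > 0 and f²α² > 1 - fβ), the pair (q, s_z) satisfies both constraints s_z² + f²β²/4 = q² and (fα - s_z)² + f²β²/4 = (1-q)². -/
/-! Writing `c = fα`, `r = √(c²(1 - f²)/(1 - c²))`, one has `q = (1 + r)/2` and
`s_z = (c² + r)/(2c)`, so both constraints reduce to the single identity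
`r²(1 - c²) = c²(1 - f²)`, i.e. to `r² = c²(1 - f²)/(1 - c²)`. -/

lemma Real.sq_sqrt_div_mul_cancel {a b : ℝ} (hab : 0 ≤ a / b) (hb : b = 0 → a = 0) :
    √(a / b) ^ 2 * b = a := by
  rw [Real.sq_sqrt hab]
  by_cases hb0 : b = 0
  · simp [hb0, hb hb0]
  · exact div_mul_cancel₀ a hb0

lemma circle_constraints_of_sq_mul_one_sub {c t r q s : ℝ} (hc : c ≠ 0)
    (hr : r ^ 2 * (1 - c ^ 2) = c ^ 2 * (1 - c ^ 2 - t))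
    (hq : q = 1/2 + (1/2) * r) (hs : s = c / 2 + q / c - 1 / (2 * c)) :
    s ^ 2 + t / 4 = q ^ 2 ∧ (c - s) ^ 2 + t / 4 = (1 - q) ^ 2 := by
  subst hq hs
  constructor <;> field_simp <;> linear_combination 4 * hr

theorem stmt6_general (α β f : ℝ) (hαβ : α ^ 2 + β ^ 2 = 1)
    (hf0 : 0 < f) (hf1 : f ≤ 1) (hα : 0 < α)
    (q s_z : ℝ)
    (hq : q = 1/2 + (1/2) * Real.sqrt (f ^ 2 * α ^ 2 * (1 - f ^ 2) / (1 - f ^ 2 * α ^ 2)))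
    (hsz : s_z = f * α / 2 + q / (f * α) - 1 / (2 * (f * α))) :
    s_z ^ 2 + f ^ 2 * β ^ 2 / 4 = q ^ 2 ∧
      (f * α - s_z) ^ 2 + f ^ 2 * β ^ 2 / 4 = (1 - q) ^ 2 := by
  have hf2 : f ^ 2 ≤ 1 := by nlinarith
  have hα2 : α ^ 2 ≤ 1 := by nlinarith [sq_nonneg β]
  have hnum : 0 ≤ f ^ 2 * α ^ 2 * (1 - f ^ 2) := by positivity [sub_nonneg.2 hf2]
  have hden : 0 ≤ 1 - f ^ 2 * α ^ 2 := by nlinarith [sq_nonneg f]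
  have hr := Real.sq_sqrt_div_mul_cancel (div_nonneg hnum hden) fun h0 => by
    have : f ^ 2 = 1 := by nlinarith [sq_nonneg f]
    simp [this]
  refine circle_constraints_of_sq_mul_one_sub (by positivity) ?_ hq hsz
  linear_combination hr + f ^ 4 * α ^ 2 * hαβ

/-- achievability of the optimum in Theorem 2 for f > f*. -/
theorem stmt6 (α β f : ℝ) (hαβ : α ^ 2 + β ^ 2 = 1)
    (hf0 : 0 < f) (hf1 : f ≤ 1) (hβ : 0 < β) (hα : 0 < α)
    (hcase : 1 - f * β < f ^ 2 * α ^ 2)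
    (q s_z : ℝ)
    (hq : q = 1/2 + (1/2) * Real.sqrt (f ^ 2 * α ^ 2 * (1 - f ^ 2) / (1 - f ^ 2 * α ^ 2)))
    (hsz : s_z = f * α / 2 + q / (f * α) - 1 / (2 * (f * α))) :
    s_z ^ 2 + f ^ 2 * β ^ 2 / 4 = q ^ 2 ∧
      (f * α - s_z) ^ 2 + f ^ 2 * β ^ 2 / 4 = (1 - q) ^ 2 :=
  stmt6_general α β f hαβ hf0 hf1 hα q s_z hq hsz
end

section
/- Let |φ₀⟩, |φ₁⟩ be unit vectors with |⟨φ₀|φ₁⟩| = cos θ, 0 < θ < π/2. Then there exists a unit vector |χ⟩ with |⟨χ|φ₀⟩|² = |⟨χ|φ₁⟩|² = cos²(θ/2), and for any unit vector |χ'⟩, min(|⟨χ'|φ₀⟩|², |⟨χ'|φ₁⟩|²) ≤ cos²(θ/2). -/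
/-!
The Gram matrix of unit vectors `w, u, v` is positive semidefinite, so its determinant
`1 - a² - b² - c² + 2 Re(⟪w,u⟫⟪u,v⟫⟪v,w⟫)` is nonnegative, where `a = |⟪w,u⟫|`, `b = |⟪w,v⟫|`,
`c = |⟪u,v⟫|`. Hence `(1 - c)(a² + b²) ≤ a² + b² - 2abc ≤ 1 - c²`, so for `c < 1` we get
`min (a², b²) ≤ (a² + b²)/2 ≤ (1 + c)/2`.
Equality is attained by the normalised sum of `u` and `v`, after rotating the phase of `v` so that
`⟪u,v⟫ = c` is real.
-/

open scoped InnerProductSpace ComplexConjugate ComplexOrder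

section RCLike

variable {𝕜 E : Type*} [RCLike 𝕜] [NormedAddCommGroup E] [InnerProductSpace 𝕜 E]

theorem norm_eq_one_of_inner_self_eq_one {x : E} (h : ⟪x, x⟫_𝕜 = 1) : ‖x‖ = 1 := by
  have hsq := inner_self_eq_norm_sq (𝕜 := 𝕜) x
  rw [h, RCLike.one_re] at hsq
  exact (pow_eq_one_iff_of_nonneg (norm_nonneg x) two_ne_zero).mp hsq.symm

theorem sq_norm_inner_add_sq_norm_inner_le {u v w : E} (hu : ‖u‖ = 1) (hv : ‖v‖ = 1)
    (hw : ‖w‖ = 1) :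
    ‖⟪w, u⟫_𝕜‖ ^ 2 + ‖⟪w, v⟫_𝕜‖ ^ 2 ≤
      1 - ‖⟪u, v⟫_𝕜‖ ^ 2 + 2 * ‖⟪w, u⟫_𝕜‖ * ‖⟪w, v⟫_𝕜‖ * ‖⟪u, v⟫_𝕜‖ := by
  have hdet := (Matrix.posSemidef_gram 𝕜 ![w, u, v]).det_nonneg
  simp only [Matrix.det_fin_three, Matrix.gram_apply, Matrix.cons_val_zero, Matrix.cons_val_one,
    Matrix.cons_val, inner_self_eq_norm_sq_to_K, hu, hv, hw, map_one, one_pow, mul_one, one_mul,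
    sub_nonneg] at hdet
  rw [← inner_conj_symm v w, ← inner_conj_symm v u, ← inner_conj_symm u w] at hdet
  set x := ⟪w, u⟫_𝕜
  set y := ⟪w, v⟫_𝕜
  set z := ⟪u, v⟫_𝕜
  have hconj : y * conj x * conj z = conj (x * z * conj y) := by
    simp only [map_mul, RCLike.conj_conj]; ring
  rw [add_assoc, hconj, RCLike.add_conj, RCLike.mul_conj, RCLike.mul_conj, RCLike.mul_conj] at hdet
  norm_cast at hdet
  have hre : RCLike.re (x * z * conj y) ≤ ‖x‖ * ‖y‖ * ‖z‖ :=
    calc RCLike.re (x * z * conj y) ≤ ‖x * z * conj y‖ := RCLike.re_le_norm _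
      _ = ‖x‖ * ‖y‖ * ‖z‖ := by rw [norm_mul, norm_mul, RCLike.norm_conj]; ring
  linarith

theorem min_sq_le_of_sq_add_sq_le {a b c : ℝ} (ha : 0 ≤ a) (hc : 0 ≤ c)
    (ha₁ : a ≤ 1) (h : a ^ 2 + b ^ 2 ≤ 1 - c ^ 2 + 2 * a * b * c) :
    min (a ^ 2) (b ^ 2) ≤ (1 + c) / 2 := by
  have hmin : 2 * min (a ^ 2) (b ^ 2) ≤ a ^ 2 + b ^ 2 := by
    linarith [min_le_left (a ^ 2) (b ^ 2), min_le_right (a ^ 2) (b ^ 2)]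
  rcases lt_or_ge c 1 with hc₁ | hc₁
  · have hprod : (1 - c) * (a ^ 2 + b ^ 2) ≤ (1 - c) * (1 + c) := by
      nlinarith [sq_nonneg (a - b)]
    linarith [le_of_mul_le_mul_left hprod (sub_pos.mpr hc₁)]
  · nlinarith [min_le_left (a ^ 2) (b ^ 2)]

theorem min_sq_norm_inner_le {u v w : E} (hu : ‖u‖ = 1) (hv : ‖v‖ = 1) (hw : ‖w‖ = 1) :
    min (‖⟪w, u⟫_𝕜‖ ^ 2) (‖⟪w, v⟫_𝕜‖ ^ 2) ≤ (1 + ‖⟪u, v⟫_𝕜‖) / 2 :=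
  min_sq_le_of_sq_add_sq_le (norm_nonneg _) (norm_nonneg _)
    (by simpa [hw, hu] using norm_inner_le_norm (𝕜 := 𝕜) w u)
    (sq_norm_inner_add_sq_norm_inner_le hu hv hw)

theorem exists_norm_eq_one_sq_norm_inner_eq_of_inner_eq_ofReal {u v : E} (hu : ‖u‖ = 1)
    (hv : ‖v‖ = 1) {r : ℝ} (hr : 0 ≤ r) (huv : ⟪u, v⟫_𝕜 = r) :
    ∃ χ : E, ‖χ‖ = 1 ∧ ‖⟪χ, u⟫_𝕜‖ ^ 2 = (1 + r) / 2 ∧ ‖⟪χ, v⟫_𝕜‖ ^ 2 = (1 + r) / 2 := by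
  set s := ‖u + v‖
  have hs_sq : s ^ 2 = 2 * (1 + r) := by
    rw [norm_add_sq (𝕜 := 𝕜), huv, RCLike.ofReal_re, hu, hv]; ring
  have hs_pos : 0 < s :=
    lt_of_pow_lt_pow_left₀ 2 (norm_nonneg _) (by rw [zero_pow two_ne_zero, hs_sq]; positivity)
  have hoverlap : ∀ x : E, ⟪u + v, x⟫_𝕜 = ((1 + r : ℝ) : 𝕜) →
      ‖⟪((s⁻¹ : ℝ) : 𝕜) • (u + v), x⟫_𝕜‖ ^ 2 = (1 + r) / 2 := by
    intro x hx
    rw [inner_smul_left, hx, RCLike.conj_ofReal, ← RCLike.ofReal_mul, RCLike.norm_ofReal, sq_abs,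
      mul_pow, inv_pow, hs_sq]
    field_simp
  refine ⟨((s⁻¹ : ℝ) : 𝕜) • (u + v), ?_, hoverlap u ?_, hoverlap v ?_⟩
  · rw [norm_smul, RCLike.norm_ofReal, abs_inv, abs_of_pos hs_pos, inv_mul_cancel₀ hs_pos.ne']
  · rw [inner_add_left, inner_self_eq_one_of_norm_eq_one hu, ← inner_conj_symm, huv,
      RCLike.conj_ofReal]
    push_cast; ring
  · rw [inner_add_left, inner_self_eq_one_of_norm_eq_one hv, huv]
    push_cast; ring

theorem star_dotProduct_eq_inner_toLp {ι : Type*} [Fintype ι] (x y : ι → 𝕜) :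
    star x ⬝ᵥ y = ⟪WithLp.toLp 2 x, WithLp.toLp 2 y⟫_𝕜 := by
  rw [EuclideanSpace.inner_toLp_toLp, dotProduct_comm]

end RCLike

section Complex

open Complex

variable {E : Type*} [NormedAddCommGroup E] [InnerProductSpace ℂ E]

theorem exists_norm_eq_one_inner_smul_eq_norm (u v : E) :
    ∃ ω : ℂ, ‖ω‖ = 1 ∧ ⟪u, ω • v⟫_ℂ = ‖⟪u, v⟫_ℂ‖ := by
  set z := ⟪u, v⟫_ℂ
  refine ⟨exp (↑(-arg z) * I), norm_exp_ofReal_mul_I _, ?_⟩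
  calc ⟪u, exp (↑(-arg z) * I) • v⟫_ℂ = exp (↑(-arg z) * I) * (‖z‖ * exp (arg z * I)) := by
        rw [inner_smul_right, norm_mul_exp_arg_mul_I]
    _ = ‖z‖ * exp (↑(-arg z) * I + arg z * I) := by rw [exp_add]; ring
    _ = ‖z‖ := by push_cast; simp

theorem exists_norm_eq_one_sq_norm_inner_eq {u v : E} (hu : ‖u‖ = 1) (hv : ‖v‖ = 1) :
    ∃ χ : E, ‖χ‖ = 1 ∧ ‖⟪χ, u⟫_ℂ‖ ^ 2 = (1 + ‖⟪u, v⟫_ℂ‖) / 2 ∧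
      ‖⟪χ, v⟫_ℂ‖ ^ 2 = (1 + ‖⟪u, v⟫_ℂ‖) / 2 := by
  obtain ⟨ω, hω, huω⟩ := exists_norm_eq_one_inner_smul_eq_norm u v
  have hωv : ‖ω • v‖ = 1 := by rw [norm_smul, hω, hv, one_mul]
  obtain ⟨χ, hχ, hχu, hχv⟩ :=
    exists_norm_eq_one_sq_norm_inner_eq_of_inner_eq_ofReal hu hωv (norm_nonneg ⟪u, v⟫_ℂ) huω
  refine ⟨χ, hχ, hχu, ?_⟩
  rwa [inner_smul_right, norm_mul, hω, one_mul] at hχv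

end Complex

theorem stmt14_general {d : ℕ} (φ₀ φ₁ : Fin d → ℂ)
    (hφ₀ : dotProduct (star φ₀) φ₀ = 1)
    (hφ₁ : dotProduct (star φ₁) φ₁ = 1)
    (θ : ℝ)
    (hover : ‖dotProduct (star φ₀) φ₁‖ = Real.cos θ) :
    (∃ χ : Fin d → ℂ, dotProduct (star χ) χ = 1 ∧
        ‖dotProduct (star χ) φ₀‖ ^ 2 = Real.cos (θ/2) ^ 2 ∧
        ‖dotProduct (star χ) φ₁‖ ^ 2 = Real.cos (θ/2) ^ 2) ∧
      ∀ χ' : Fin d → ℂ, dotProduct (star χ') χ' = 1 →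
        min (‖dotProduct (star χ') φ₀‖ ^ 2)
            (‖dotProduct (star χ') φ₁‖ ^ 2) ≤ Real.cos (θ/2) ^ 2 := by
  simp only [star_dotProduct_eq_inner_toLp] at hφ₀ hφ₁ hover ⊢
  have hcos : Real.cos (θ / 2) ^ 2 = (1 + ‖⟪WithLp.toLp 2 φ₀, WithLp.toLp 2 φ₁⟫_ℂ‖) / 2 := by
    rw [Real.cos_sq, hover, mul_div_cancel₀ θ two_ne_zero]; ring
  have hu := norm_eq_one_of_inner_self_eq_one hφ₀
  have hv := norm_eq_one_of_inner_self_eq_one hφ₁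
  rw [hcos]
  refine ⟨?_, fun χ hχ => min_sq_norm_inner_le hu hv (norm_eq_one_of_inner_self_eq_one hχ)⟩
  obtain ⟨χ, hχ, hχu, hχv⟩ := exists_norm_eq_one_sq_norm_inner_eq hu hv
  exact ⟨WithLp.ofLp χ, by simpa using inner_self_eq_one_of_norm_eq_one (𝕜 := ℂ) hχ,
    by simpa using hχu, by simpa using hχv⟩

/-- Alice's optimal cheating state: there is a unit vector χ with
|⟨χ|φ₀⟩|² = |⟨χ|φ₁⟩|² = cos²(θ/2), and no unit vector does better on both overlaps. -/
theorem stmt14 {d : ℕ} (φ₀ φ₁ : Fin d → ℂ)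
    (hφ₀ : dotProduct (star φ₀) φ₀ = 1)
    (hφ₁ : dotProduct (star φ₁) φ₁ = 1)
    (θ : ℝ) (hθ0 : 0 < θ) (hθ1 : θ < Real.pi / 2)
    (hover : ‖dotProduct (star φ₀) φ₁‖ = Real.cos θ) :
    (∃ χ : Fin d → ℂ, dotProduct (star χ) χ = 1 ∧
        ‖dotProduct (star χ) φ₀‖ ^ 2 = Real.cos (θ/2) ^ 2 ∧
        ‖dotProduct (star χ) φ₁‖ ^ 2 = Real.cos (θ/2) ^ 2) ∧
      ∀ χ' : Fin d → ℂ, dotProduct (star χ') χ' = 1 →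
        min (‖dotProduct (star χ') φ₀‖ ^ 2)
            (‖dotProduct (star χ') φ₁‖ ^ 2) ≤ Real.cos (θ/2) ^ 2 :=
  stmt14_general φ₀ φ₁ hφ₀ hφ₁ θ hover
end

section
/- For the function ε_A(f) defined piecewise by ε_A(f) = (1/2)(1 - f·sin θ) for 0 ≤ f ≤ f* and ε_A(f) = (1/2)·√(f²(1-f²)cos²θ/(1-f²cos²θ)) for f* < f ≤ 1, with 0 < θ < π/2 and f* = (√(1+3cos²θ) - sin θ)/(2cos²θ), the function ε_A is monotonically nonincreasing on [0,1] and ε_A(1) = 0. -/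
set_option maxHeartbeats 1000000 in
private lemma stmt16_aux (s c fstar : ℝ) (hs0 : 0 < s) (hc0 : 0 < c)
    (hpyth : s ^ 2 + c ^ 2 = 1) (hs1 : s < 1)
    (hE : c ^ 2 * fstar ^ 2 + s * fstar = 1)
    (hfs_pos : 0 < fstar) (hfs_lt1 : fstar < 1) :
    AntitoneOn (fun f : ℝ => if f ≤ fstar then (1/2) * (1 - f * s)
      else (1/2) * Real.sqrt (f ^ 2 * (1 - f ^ 2) * c ^ 2 / (1 - f ^ 2 * c ^ 2)))
      (Set.Icc 0 1) := by
  have hc2 : c ^ 2 < 1 := by nlinarith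
  -- derived identities
  have h1f : 1 - fstar ^ 2 * c ^ 2 = s * fstar := by linear_combination -hE
  have h2f : 1 - fstar ^ 2 = s * c ^ 2 * fstar ^ 3 := by
    linear_combination (-(1 + s * fstar)) * hE + fstar ^ 2 * hpyth
  -- q(x) = c²x² - 2x + 1 ≤ 0 on [fstar², 1]
  have hQ : ∀ x : ℝ, fstar ^ 2 ≤ x → x ≤ 1 → c ^ 2 * x ^ 2 - 2 * x + 1 ≤ 0 := by
    intro x hx1 hx2
    have hqf : c ^ 2 * fstar ^ 4 - 2 * fstar ^ 2 + 1 = -(s ^ 3 * fstar ^ 3) := by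
      linear_combination (-(fstar ^ 2)) * h1f + h2f + s * fstar ^ 3 * hpyth
    have ht : 0 ≤ (x - fstar ^ 2) * (2 - c ^ 2 * (x + fstar ^ 2)) := by
      apply mul_nonneg (by linarith)
      nlinarith [sq_nonneg fstar, hfs_lt1, hfs_pos]
    nlinarith [ht, hqf, mul_pos (pow_pos hs0 3) (pow_pos hfs_pos 3)]
  -- monotonicity of the sqrt branch on [fstar, 1]
  have hg : ∀ a b : ℝ, fstar ≤ a → a ≤ b → b ≤ 1 →
      Real.sqrt (b ^ 2 * (1 - b ^ 2) * c ^ 2 / (1 - b ^ 2 * c ^ 2)) ≤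
      Real.sqrt (a ^ 2 * (1 - a ^ 2) * c ^ 2 / (1 - a ^ 2 * c ^ 2)) := by
    intro a b h1 h2 h3
    have ha0 : 0 < a := lt_of_lt_of_le hfs_pos h1
    have ha1 : a ≤ 1 := h2.trans h3
    have hb0 : 0 < b := lt_of_lt_of_le ha0 h2
    have ha2 : a ^ 2 ≤ 1 := by nlinarith
    have hb2 : b ^ 2 ≤ 1 := by nlinarith
    have hda : 0 < 1 - a ^ 2 * c ^ 2 := by nlinarith [sq_nonneg c]
    have hdb : 0 < 1 - b ^ 2 * c ^ 2 := by nlinarith [sq_nonneg c]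
    apply Real.sqrt_le_sqrt
    rw [div_le_div_iff₀ hdb hda]
    have hq := hQ (a ^ 2) (by nlinarith) ha2
    have hab2 : a ^ 2 ≤ b ^ 2 := by nlinarith
    have t2 : 0 ≤ (b ^ 2 - a ^ 2) * (-(c ^ 2 * (a ^ 2) ^ 2 - 2 * a ^ 2 + 1)) :=
      mul_nonneg (by linarith) (by nlinarith)
    have t3 : 0 ≤ (b ^ 2 - a ^ 2) ^ 2 * (1 - c ^ 2 * a ^ 2) :=
      mul_nonneg (sq_nonneg _) (by nlinarith [sq_nonneg c])
    nlinarith [mul_nonneg (sq_nonneg c) t2, mul_nonneg (sq_nonneg c) t3]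
  -- value of the sqrt branch at fstar equals the linear branch value
  have hgf : Real.sqrt (fstar ^ 2 * (1 - fstar ^ 2) * c ^ 2 / (1 - fstar ^ 2 * c ^ 2)) =
      c ^ 2 * fstar ^ 2 := by
    have hsf : s * fstar ≠ 0 := by positivity
    have harg : fstar ^ 2 * (1 - fstar ^ 2) * c ^ 2 / (1 - fstar ^ 2 * c ^ 2) =
        (c ^ 2 * fstar ^ 2) ^ 2 := by
      rw [h1f, h2f]
      field_simp
    rw [harg]
    exact Real.sqrt_sq (by positivity)
  intro a ha b hb hab
  simp only
  by_cases hb' : b ≤ fstar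
  · have ha' : a ≤ fstar := hab.trans hb'
    rw [if_pos ha', if_pos hb']
    nlinarith
  · rw [if_neg hb']
    push_neg at hb'
    by_cases ha' : a ≤ fstar
    · rw [if_pos ha']
      have e1 := hg fstar b le_rfl hb'.le hb.2
      rw [hgf] at e1
      have e2 : c ^ 2 * fstar ^ 2 = 1 - fstar * s := by linear_combination -h1f
      nlinarith [e1, e2, mul_le_mul_of_nonneg_right ha' hs0.le]
    · rw [if_neg ha']
      push_neg at ha'
      have := hg a b ha'.le hab hb.2
      linarith

/-- Alice's optimal bias ε_A is nonincreasing in f on [0,1] and vanishes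
at f = 1. -/
theorem stmt16 (θ : ℝ) (hθ0 : 0 < θ) (hθ1 : θ < Real.pi / 2) :
    let fstar := (Real.sqrt (1 + 3 * Real.cos θ ^ 2) - Real.sin θ) / (2 * Real.cos θ ^ 2)
    let εA : ℝ → ℝ := fun f =>
      if f ≤ fstar then (1/2) * (1 - f * Real.sin θ)
      else (1/2) * Real.sqrt (f ^ 2 * (1 - f ^ 2) * Real.cos θ ^ 2 /
        (1 - f ^ 2 * Real.cos θ ^ 2))
    AntitoneOn εA (Set.Icc 0 1) ∧ εA 1 = 0 := by
  intro fstar εA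
  have hf : fstar = (Real.sqrt (1 + 3 * Real.cos θ ^ 2) - Real.sin θ) / (2 * Real.cos θ ^ 2) :=
    rfl
  have hεA : ∀ f, εA f = if f ≤ fstar then (1/2) * (1 - f * Real.sin θ)
      else (1/2) * Real.sqrt (f ^ 2 * (1 - f ^ 2) * Real.cos θ ^ 2 /
        (1 - f ^ 2 * Real.cos θ ^ 2)) := fun f => rfl
  clear_value εA fstar
  set s := Real.sin θ with hsdef
  set c := Real.cos θ with hcdef
  have hs0 : 0 < s := Real.sin_pos_of_pos_of_lt_pi hθ0 (by linarith [Real.pi_pos, hθ1])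
  have hc0 : 0 < c := Real.cos_pos_of_mem_Ioo ⟨by linarith [Real.pi_pos], hθ1⟩
  have hpyth : s ^ 2 + c ^ 2 = 1 := Real.sin_sq_add_cos_sq θ
  have hs1 : s < 1 := by nlinarith
  have hr0 : (0:ℝ) ≤ Real.sqrt (1 + 3 * c ^ 2) := Real.sqrt_nonneg _
  have hr : Real.sqrt (1 + 3 * c ^ 2) ^ 2 = 1 + 3 * c ^ 2 :=
    Real.sq_sqrt (by positivity)
  set r := Real.sqrt (1 + 3 * c ^ 2) with hrdef
  have hE : c ^ 2 * fstar ^ 2 + s * fstar = 1 := by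
    rw [hf]
    have h2c : (2 * c ^ 2) ≠ 0 := by positivity
    field_simp
    nlinarith [hr, hpyth]
  have hfs_pos : 0 < fstar := by
    rw [hf]
    apply div_pos _ (by positivity)
    have hrs : s < r := by nlinarith
    linarith
  have hfs_lt1 : fstar < 1 := by
    by_contra h
    push_neg at h
    have e1 : 0 ≤ (fstar ^ 2 - 1) * c ^ 2 := mul_nonneg (by nlinarith) (by positivity)
    have e2 : 0 ≤ (fstar - 1) * s := mul_nonneg (by linarith) hs0.le
    nlinarith [hE, hpyth, e1, e2, mul_pos hs0 (sub_pos.2 hs1)]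
  have haux := stmt16_aux s c fstar hs0 hc0 hpyth hs1 hE hfs_pos hfs_lt1
  constructor
  · intro a ha b hb hab
    rw [hεA a, hεA b]
    exact haux ha hb hab
  · rw [hεA 1, if_neg (not_le.2 hfs_lt1)]
    norm_num
end
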